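/- arXiv:1806.03868 — 2 statements merged into one kernel-verified Lean document; each statement's English description precedes it below -/
import Mathlib

section
/- Let V be an m-ordered PSO on the infinite simplex S such that V(e_i) = e_i for all i ∈ ℕ. If V is orthogonal preserving, then for all indices i_1,...,i_m, k ∈ ℕ with k ∉ {i_1,...,i_m}, one has P_{i_1...i_m,k} = 0. -/
/-- The m-ordered polynomial operator associated to a hypermatrix `P`. -/
noncomputable def psoV (m : ℕ) (P : (Fin m → ℕ) → ℕ → ℝ) (x : ℕ → ℝ) (k : ℕ) : ℝ :=
  ∑' i : Fin m → ℕ, P i k * ∏ j, x (i j)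

/-- The hypermatrix is stochastic. -/
def IsStochastic (m : ℕ) (P : (Fin m → ℕ) → ℕ → ℝ) : Prop :=
  (∀ i k, 0 ≤ P i k) ∧ ∀ i, HasSum (fun k => P i k) 1

/-- symmetry of the hypermatrix in its first m indices. -/
def HypSymm (m : ℕ) (P : (Fin m → ℕ) → ℕ → ℝ) : Prop :=
  ∀ (σ : Equiv.Perm (Fin m)) (i : Fin m → ℕ) (k : ℕ), P (i ∘ σ) k = P i k

/-- membership in the infinite-dimensional simplex S. -/
def inS (x : ℕ → ℝ) : Prop := (∀ i, 0 ≤ x i) ∧ HasSum x 1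

/-- the standard basis vector e_i. -/
def stdBasis (i : ℕ) : ℕ → ℝ := fun n => if n = i then 1 else 0

/-- x and y are orthogonal: disjoint supports. -/
def Orth (x y : ℕ → ℝ) : Prop := ∀ k, x k * y k = 0

/-- V is orthogonal preserving on S. -/
def IsOP (m : ℕ) (P : (Fin m → ℕ) → ℕ → ℝ) : Prop :=
  ∀ x y : ℕ → ℝ, inS x → inS y → Orth x y → Orth (psoV m P x) (psoV m P y)

/-- V is surjective on S. -/
def SurjOnS (m : ℕ) (P : (Fin m → ℕ) → ℕ → ℝ) : Prop :=
  ∀ y : ℕ → ℝ, inS y → ∃ x : ℕ → ℝ, inS x ∧ psoV m P x = y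

/-!
Let `A = {i₁, …, i_m}` and let `x` be the uniform distribution on `A`. Since `k ∉ A`, `x ⊥ e_k`,
so orthogonality preservation and `V(e_k) = e_k` force `V(x)_k = 0`. But `V(x)_k` is a sum of
nonnegative terms, one of which is `P_{i₁…i_m,k} · |A|^{-m}`, so that coefficient vanishes.
-/

open Finset

noncomputable def uniformOn (A : Finset ℕ) : ℕ → ℝ :=
  fun n => if n ∈ A then (#A : ℝ)⁻¹ else 0

lemma uniformOn_nonneg (A : Finset ℕ) (n : ℕ) : 0 ≤ uniformOn A n := by
  unfold uniformOn
  split_ifs <;> positivity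

lemma uniformOn_pos {A : Finset ℕ} {n : ℕ} (hn : n ∈ A) : 0 < uniformOn A n := by
  have : 0 < (#A : ℝ) := by exact_mod_cast card_pos.mpr ⟨n, hn⟩
  simpa [uniformOn, hn]

lemma uniformOn_eq_zero {A : Finset ℕ} {n : ℕ} (hn : n ∉ A) : uniformOn A n = 0 := by
  simp [uniformOn, hn]

lemma inS_uniformOn {A : Finset ℕ} (hA : A.Nonempty) : inS (uniformOn A) := by
  refine ⟨uniformOn_nonneg A, ?_⟩
  have hsum : ∑ n ∈ A, uniformOn A n = 1 := by
    have hcard : (#A : ℝ) ≠ 0 := by exact_mod_cast hA.card_pos.ne'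
    rw [sum_congr rfl fun n hn => show uniformOn A n = (#A : ℝ)⁻¹ from if_pos hn,
      sum_const, nsmul_eq_mul, mul_inv_cancel₀ hcard]
  exact hsum ▸ hasSum_sum_of_ne_finset_zero fun n hn => uniformOn_eq_zero hn

lemma inS_stdBasis (k : ℕ) : inS (stdBasis k) :=
  ⟨fun n => by unfold stdBasis; split_ifs <;> norm_num, hasSum_ite_eq k 1⟩

lemma orth_stdBasis {x : ℕ → ℝ} {k : ℕ} (hx : x k = 0) : Orth x (stdBasis k) := by
  intro n
  by_cases hn : n = k
  · simp [hn, hx]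
  · simp [stdBasis, hn]

/-- Orthogonality to the fixed point `e_k` is preserved, and `V(e_k)_k = 1`. -/
lemma IsOP.psoV_apply_eq_zero {m : ℕ} {P : (Fin m → ℕ) → ℕ → ℝ} (hop : IsOP m P) {k : ℕ}
    (hk : psoV m P (stdBasis k) = stdBasis k) {x : ℕ → ℝ} (hxS : inS x) (hx : x k = 0) :
    psoV m P x k = 0 := by
  have h := hop x (stdBasis k) hxS (inS_stdBasis k) (orth_stdBasis hx) k
  simpa [hk, stdBasis] using h

lemma psoV_apply_pos {m : ℕ} {P : (Fin m → ℕ) → ℕ → ℝ} (hP : ∀ i k, 0 ≤ P i k)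
    {A : Finset ℕ} {x : ℕ → ℝ} (hx : ∀ n, 0 ≤ x n) (hxA : ∀ n ∉ A, x n = 0)
    {i : Fin m → ℕ} {k : ℕ} (hik : 0 < P i k) (hxi : ∀ j, 0 < x (i j)) :
    0 < psoV m P x k := by
  classical
  have hsupp : ∀ t ∉ Fintype.piFinset fun _ => A, P t k * ∏ j, x (t j) = 0 := by
    intro t ht
    obtain ⟨j, hj⟩ := not_forall.mp (Fintype.mem_piFinset.not.mp ht)
    rw [prod_eq_zero (f := fun j => x (t j)) (mem_univ j) (hxA _ hj), mul_zero]
  exact (summable_of_ne_finset_zero hsupp).tsum_pos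
    (fun t => mul_nonneg (hP t k) (prod_nonneg fun j _ => hx _)) i
    (mul_pos hik (prod_pos fun j _ => hxi j))

theorem stmt2_general (m : ℕ) (hm : 1 ≤ m) (P : (Fin m → ℕ) → ℕ → ℝ)
    (hP : IsStochastic m P)
    (hfix : ∀ i : ℕ, psoV m P (stdBasis i) = stdBasis i)
    (hop : IsOP m P) :
    ∀ (i : Fin m → ℕ) (k : ℕ), (∀ j, i j ≠ k) → P i k = 0 := by
  intro i k hik
  set A := univ.image i
  have hiA : ∀ j, i j ∈ A := fun j => mem_image_of_mem i (mem_univ j)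
  have hkA : k ∉ A := by simpa [A] using hik
  have hVk : psoV m P (uniformOn A) k = 0 :=
    hop.psoV_apply_eq_zero (hfix k) (inS_uniformOn ⟨_, hiA ⟨0, hm⟩⟩) (uniformOn_eq_zero hkA)
  refine le_antisymm (not_lt.mp fun hpos => ?_) (hP.1 i k)
  exact hVk.not_gt <| psoV_apply_pos hP.1 (uniformOn_nonneg A) (fun n => uniformOn_eq_zero)
    hpos fun j => uniformOn_pos (hiA j)

theorem stmt2 (m : ℕ) (hm : 1 ≤ m) (P : (Fin m → ℕ) → ℕ → ℝ)
    (hP : IsStochastic m P) (hsym : HypSymm m P)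
    (hfix : ∀ i : ℕ, psoV m P (stdBasis i) = stdBasis i)
    (hop : IsOP m P) :
    ∀ (i : Fin m → ℕ) (k : ℕ), (∀ j, i j ≠ k) → P i k = 0 :=
  stmt2_general m hm P hP hfix hop
end

section
/- Let V be an m-ordered PSO on S and A, B ⊂ ℕ. If V(x⁰) ∈ int Γ_B for some x⁰ ∈ int Γ_A, then V(x) ∈ int Γ_B for every x ∈ int Γ_A. -/
/-- membership in the relative interior of the face Γ_A of the simplex. -/
def inIntFace (A : Set ℕ) (x : ℕ → ℝ) : Prop :=
  inS x ∧ (∀ i ∈ A, 0 < x i) ∧ ∀ i ∉ A, x i = 0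

/-!
The support of `V x` depends only on the support of `x`: since every term of
`V(x)_k = ∑ P_{i,k} x_{i_1} ⋯ x_{i_m}` is nonnegative, `V(x)_k = 0` exactly when `P_{i,k} = 0`
for every multi-index `i` with all entries in `supp x`. Hence all points of `int Γ_A` are mapped
to points with the same support, and stochasticity of `P` keeps `V x` in the simplex.
-/

open Finset

lemma hasSum_prod_of_nonneg_of_fiberwise {β γ : Type*} {F : β × γ → ℝ} (hF : 0 ≤ F)
    {g : β → ℝ} {a : ℝ} (hfib : ∀ b, HasSum (fun c => F (b, c)) (g b)) (hg : HasSum g a) :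
    HasSum F a := by
  have hsum : Summable F :=
    (summable_prod_of_nonneg hF).2
      ⟨fun b => (hfib b).summable, by simpa only [(hfib _).tsum_eq] using hg.summable⟩
  obtain rfl := (hsum.hasSum.prod_fiberwise hfib).unique hg
  exact hsum.hasSum

lemma hasSum_prod_pi_of_nonneg {ι : Type*} {x : ι → ℝ} (hx0 : 0 ≤ x) {a : ℝ} (hx : HasSum x a)
    (n : ℕ) : HasSum (fun i : Fin n → ι => ∏ j, x (i j)) (a ^ n) := by
  induction n with
  | zero => simp
  | succ n ih =>
    rw [← (Fin.consEquiv fun _ => ι).hasSum_iff]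
    simp only [Function.comp_def, Fin.consEquiv_apply, Fin.prod_univ_succ, Fin.cons_zero,
      Fin.cons_succ, pow_succ']
    exact hasSum_prod_of_nonneg_of_fiberwise
      (fun p => mul_nonneg (hx0 _) (prod_nonneg fun _ _ => hx0 _))
      (fun b => ih.mul_left (x b)) (hx.mul_right _)

section Stochastic

variable {m : ℕ} {P : (Fin m → ℕ) → ℕ → ℝ}

lemma psoV_term_nonneg (hP : IsStochastic m P) {x : ℕ → ℝ} (hx : ∀ i, 0 ≤ x i)
    (i : Fin m → ℕ) (k : ℕ) : 0 ≤ P i k * ∏ j, x (i j) :=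
  mul_nonneg (hP.1 i k) (prod_nonneg fun _ _ => hx _)

lemma summable_psoV_term (hP : IsStochastic m P) {x : ℕ → ℝ} (hx : inS x) (k : ℕ) :
    Summable fun i : Fin m → ℕ => P i k * ∏ j, x (i j) :=
  Summable.of_nonneg_of_le (fun i => psoV_term_nonneg hP hx.1 i k)
    (fun i => mul_le_of_le_one_left (prod_nonneg fun _ _ => hx.1 _)
      (le_hasSum (hP.2 i) k fun j _ => hP.1 i j))
    (hasSum_prod_pi_of_nonneg hx.1 hx.2 m).summable

lemma inS_psoV (hP : IsStochastic m P) {x : ℕ → ℝ} (hx : inS x) : inS (psoV m P x) := by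
  refine ⟨fun k => tsum_nonneg fun i => psoV_term_nonneg hP hx.1 i k, ?_⟩
  -- Sum first over `k` (where `P` sums to `1`), then over the multi-index.
  have hjoint : HasSum (fun p : (Fin m → ℕ) × ℕ => P p.1 p.2 * ∏ j, x (p.1 j)) 1 := by
    have hfib : ∀ i : Fin m → ℕ, HasSum (fun k => P i k * ∏ j, x (i j)) (∏ j, x (i j)) :=
      fun i => by simpa only [one_mul] using (hP.2 i).mul_right (∏ j, x (i j))
    have hprod : HasSum (fun i : Fin m → ℕ => ∏ j, x (i j)) 1 := by
      simpa only [one_pow] using hasSum_prod_pi_of_nonneg hx.1 hx.2 m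
    exact hasSum_prod_of_nonneg_of_fiberwise
      (fun p => psoV_term_nonneg hP hx.1 p.1 p.2) hfib hprod
  exact ((Equiv.prodComm ℕ (Fin m → ℕ)).hasSum_iff.2 hjoint).prod_fiberwise
    fun k => (summable_psoV_term hP hx k).hasSum

lemma psoV_eq_zero_iff (hP : IsStochastic m P) {A : Set ℕ} {x : ℕ → ℝ} (hx : inIntFace A x)
    (k : ℕ) : psoV m P x k = 0 ↔ ∀ i : Fin m → ℕ, (∀ j, i j ∈ A) → P i k = 0 := by
  have hterm : ∀ i : Fin m → ℕ, P i k * ∏ j, x (i j) = 0 ↔ ((∀ j, i j ∈ A) → P i k = 0) := by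
    intro i
    by_cases hi : ∀ j, i j ∈ A
    · have hpos : 0 < ∏ j, x (i j) := prod_pos fun j _ => hx.2.1 _ (hi j)
      simp [hi, hpos.ne']
    · obtain ⟨j, hj⟩ := not_forall.1 hi
      have hzero : ∏ j, x (i j) = 0 := prod_eq_zero (mem_univ j) (hx.2.2 _ hj)
      simp [hi, hzero]
  rw [psoV, ← (summable_psoV_term hP hx.1 k).hasSum_iff,
    hasSum_zero_iff_of_nonneg fun i => psoV_term_nonneg hP hx.1.1 i k, funext_iff]
  exact forall_congr' hterm

end Stochastic

lemma inIntFace_iff_of_inS {B : Set ℕ} {y : ℕ → ℝ} (hy : inS y) :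
    inIntFace B y ↔ ∀ k, y k = 0 ↔ k ∉ B := by
  refine ⟨fun hB k => ⟨fun h0 hk => (hB.2.1 k hk).ne' h0, hB.2.2 k⟩, fun hB => ⟨hy, ?_, ?_⟩⟩
  · exact fun k hk => (hy.1 k).lt_of_ne' fun h0 => (hB k).1 h0 hk
  · exact fun k hk => (hB k).2 hk

theorem stmt6_general (m : ℕ) (P : (Fin m → ℕ) → ℕ → ℝ)
    (hP : IsStochastic m P) (A B : Set ℕ)
    (h : ∃ x0 : ℕ → ℝ, inIntFace A x0 ∧ inIntFace B (psoV m P x0)) :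
    ∀ x : ℕ → ℝ, inIntFace A x → inIntFace B (psoV m P x) := by
  obtain ⟨x0, hx0, hVx0⟩ := h
  intro x hx
  rw [inIntFace_iff_of_inS hVx0.1] at hVx0
  rw [inIntFace_iff_of_inS (inS_psoV hP hx.1)]
  intro k
  rw [psoV_eq_zero_iff hP hx, ← hVx0 k, psoV_eq_zero_iff hP hx0]

theorem stmt6 (m : ℕ) (hm : 1 ≤ m) (P : (Fin m → ℕ) → ℕ → ℝ)
    (hP : IsStochastic m P) (A B : Set ℕ)
    (h : ∃ x0 : ℕ → ℝ, inIntFace A x0 ∧ inIntFace B (psoV m P x0)) :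
    ∀ x : ℕ → ℝ, inIntFace A x → inIntFace B (psoV m P x) :=
  stmt6_general m P hP A B h
end
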